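/- Let (y_k, x_{k+1}) be generated by the non-Euclidean extragradient step: y_k = P_{x_k}(γ_k F(x_k)), x_{k+1} = P_{x_k}(γ_k F(y_k)). If x* ∈ X satisfies ⟨F(x), x−x*⟩ ≥ 0 for all x ∈ X (generalized monotonicity), then −(γ_k²/(2α))‖F(x_k)−F(y_k)‖_*² + V(x_k, y_k) ≤ V(x_k, x*) − V(x_{k+1}, x*). -/

import Mathlib

/-!
Both prox steps are variational inequalities; by the three-point identity for Bregman
distances they become `⟪γ F(x_k), y_k - x_{k+1}⟫ ≤ V(x_k,x_{k+1}) - V(y_k,x_{k+1}) - V(x_k,y_k)`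
and `⟪γ F(y_k), x_{k+1} - x*⟫ ≤ V(x_k,x*) - V(x_{k+1},x*) - V(x_k,x_{k+1})`. Adding them and
using `⟪F(y_k), y_k - x*⟫ ≥ 0` leaves the error term `γ ⟪F(x_k) - F(y_k), x_{k+1} - y_k⟫`, which
is at most `γ ‖F(x_k) - F(y_k)‖_* ‖y_k - x_{k+1}‖` and is absorbed by the strong convexity bound
`V(y_k,x_{k+1}) ≥ (α/2)‖y_k - x_{k+1}‖²` via Young's inequality.
-/

open scoped InnerProductSpace

/-- The Bregman distance `V(x,z) = ω(z) − ω(x) − ⟨∇ω(x), z−x⟩`. -/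
noncomputable def bregman {n : ℕ} (ω : EuclideanSpace ℝ (Fin n) → ℝ)
    (gω : EuclideanSpace ℝ (Fin n) → EuclideanSpace ℝ (Fin n))
    (x z : EuclideanSpace ℝ (Fin n)) : ℝ :=
  ω z - ω x - ⟪gω x, z - x⟫_ℝ

theorem IsMinOn.hasFDerivAt_sub_nonneg {E : Type*} [NormedAddCommGroup E] [NormedSpace ℝ E]
    {f : E → ℝ} {f' : StrongDual ℝ E} {X : Set E} {u z : E} (hmin : IsMinOn f X u)
    (hf : HasFDerivAt f f' u) (hX : Convex ℝ X) (hu : u ∈ X) (hz : z ∈ X) : 0 ≤ f' (z - u) :=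
  hmin.localize.hasFDerivWithinAt_nonneg hf.hasFDerivWithinAt
    (sub_mem_posTangentConeAt_of_segment_subset (hX.segment_subset hu hz))

namespace Seminorm

variable {E : Type*}

theorem exists_pos_mul_norm_le [NormedAddCommGroup E] [NormedSpace ℝ E] [FiniteDimensional ℝ E]
    (p : Seminorm ℝ E) (hp : ∀ v, p v = 0 → v = 0) : ∃ c > 0, ∀ v, c * ‖v‖ ≤ p v := by
  rcases subsingleton_or_nontrivial E with _ | _
  · exact ⟨1, one_pos, fun v => by simp [Subsingleton.elim v 0]⟩
  have hcont : Continuous p := continuousOn_univ.mp (p.convexOn.continuousOn isOpen_univ)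
  obtain ⟨m, hm, hmin⟩ := (isCompact_sphere (0 : E) 1).exists_isMinOn
    (NormedSpace.sphere_nonempty.mpr zero_le_one) hcont.continuousOn
  have hm0 : m ≠ 0 := ne_zero_of_mem_unit_sphere ⟨m, hm⟩
  refine ⟨p m, (apply_nonneg p m).lt_of_ne' (mt (hp m) hm0), fun v => ?_⟩
  rcases eq_or_ne v 0 with rfl | hv
  · simp
  have hv' : 0 < ‖v‖ := norm_pos_iff.mpr hv
  have hunit : p m ≤ ‖v‖⁻¹ * p v := by
    simpa [map_smul_eq_mul, norm_smul, hv'.ne'] using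
      hmin (show ‖v‖⁻¹ • v ∈ Metric.sphere (0 : E) 1 by simp [norm_smul, hv'.ne'])
  calc p m * ‖v‖ ≤ ‖v‖⁻¹ * p v * ‖v‖ := by gcongr
    _ = p v := by field_simp

variable [NormedAddCommGroup E] [InnerProductSpace ℝ E]

noncomputable def dualNorm (p : Seminorm ℝ E) (φ : E) : ℝ :=
  sSup ((fun v => ⟪φ, v⟫_ℝ) '' {v | p v ≤ 1})

theorem inner_le_dualNorm_mul [FiniteDimensional ℝ E] (p : Seminorm ℝ E)
    (hp : ∀ v, p v = 0 → v = 0) (φ v : E) : ⟪φ, v⟫_ℝ ≤ p.dualNorm φ * p v := by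
  obtain ⟨c, hc, hcp⟩ := p.exists_pos_mul_norm_le hp
  have hbdd : BddAbove ((fun v => ⟪φ, v⟫_ℝ) '' {v | p v ≤ 1}) := by
    refine ⟨‖φ‖ / c, ?_⟩
    rintro _ ⟨w, hw, rfl⟩
    calc ⟪φ, w⟫_ℝ ≤ ‖φ‖ * ‖w‖ := real_inner_le_norm φ w
      _ ≤ ‖φ‖ / c := by
        rw [le_div_iff₀ hc, mul_assoc]
        exact mul_le_of_le_one_right (norm_nonneg φ) (by rw [mul_comm]; exact (hcp w).trans hw)
  rcases eq_or_lt_of_le (apply_nonneg p v) with hv | hv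
  · simp [hp v hv.symm]
  have hunit : ⟪φ, (p v)⁻¹ • v⟫_ℝ ≤ p.dualNorm φ :=
    le_csSup hbdd ⟨_, by simp [map_smul_eq_mul, abs_of_pos hv, hv.ne'], rfl⟩
  rw [real_inner_smul_right] at hunit
  calc ⟪φ, v⟫_ℝ = (p v)⁻¹ * ⟪φ, v⟫_ℝ * p v := by field_simp
    _ ≤ p.dualNorm φ * p v := by gcongr

end Seminorm

section Bregman

variable {n : ℕ} {ω : EuclideanSpace ℝ (Fin n) → ℝ}
  {gω : EuclideanSpace ℝ (Fin n) → EuclideanSpace ℝ (Fin n)}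

theorem bregman_three_point (x u z : EuclideanSpace ℝ (Fin n)) :
    bregman ω gω x z - bregman ω gω u z - bregman ω gω x u = ⟪gω u - gω x, z - u⟫_ℝ := by
  simp only [bregman, inner_sub_left, inner_sub_right]
  ring

theorem hasFDerivAt_bregman (x u : EuclideanSpace ℝ (Fin n)) (hgrad : HasGradientAt ω (gω u) u) :
    HasFDerivAt (bregman ω gω x)
      (InnerProductSpace.toDual ℝ _ (gω u) - innerSL ℝ (gω x)) u := by
  have hlin : HasFDerivAt (fun w => ⟪gω x, w - x⟫_ℝ) (innerSL ℝ (gω x)) u := by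
    simpa [inner_sub_right] using (innerSL ℝ (gω x)).hasFDerivAt.sub_const ⟪gω x, x⟫_ℝ
  exact (hgrad.hasFDerivAt.sub_const (ω x)).sub hlin

theorem inner_le_bregman_of_isMinOn {X : Set (EuclideanSpace ℝ (Fin n))} (hX : Convex ℝ X)
    {φ x u z : EuclideanSpace ℝ (Fin n)} (hu : u ∈ X) (hz : z ∈ X)
    (hgrad : HasGradientAt ω (gω u) u)
    (hmin : IsMinOn (fun w => ⟪φ, w⟫_ℝ + bregman ω gω x w) X u) :
    ⟪φ, u - z⟫_ℝ ≤ bregman ω gω x z - bregman ω gω u z - bregman ω gω x u := by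
  have hopt := hmin.hasFDerivAt_sub_nonneg
    ((innerSL ℝ φ).hasFDerivAt.add (hasFDerivAt_bregman x u hgrad)) hX hu hz
  simp only [add_apply, sub_apply, innerSL_apply_apply,
    InnerProductSpace.toDual_apply_apply] at hopt
  rw [bregman_three_point, ← neg_sub z u, inner_neg_right, inner_sub_left]
  linarith

end Bregman

theorem stmt12_general {n : ℕ} (X Xo : Set (EuclideanSpace ℝ (Fin n)))
    (hXcv : Convex ℝ X)
    (nrm dnrm : EuclideanSpace ℝ (Fin n) → ℝ)
    (hn0 : ∀ v, nrm v = 0 ↔ v = 0)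
    (hns : ∀ (c : ℝ) v, nrm (c • v) = |c| * nrm v)
    (hnt : ∀ v w, nrm (v + w) ≤ nrm v + nrm w)
    (hdual : ∀ φ, dnrm φ = sSup ((fun v => ⟪φ, v⟫_ℝ) '' {v | nrm v ≤ 1}))
    (F : EuclideanSpace ℝ (Fin n) → EuclideanSpace ℝ (Fin n))
    (α : ℝ) (hα : 0 < α)
    (ω : EuclideanSpace ℝ (Fin n) → ℝ)
    (gω : EuclideanSpace ℝ (Fin n) → EuclideanSpace ℝ (Fin n))
    (hgrad : ∀ y ∈ Xo, HasGradientAt ω (gω y) y)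
    (hsc : ∀ y ∈ Xo, ∀ z ∈ X, α / 2 * (nrm (y - z)) ^ 2 ≤ bregman ω gω y z)
    (xs : EuclideanSpace ℝ (Fin n)) (hxs : xs ∈ X)
    (hGM : ∀ x ∈ X, 0 ≤ ⟪F x, x - xs⟫_ℝ)
    (γk : ℝ) (hγk : 0 < γk)
    (xk yk xk1 : EuclideanSpace ℝ (Fin n))
    (hykX : yk ∈ X) (hyko : yk ∈ Xo)
    (hyk : IsMinOn (fun z => ⟪γk • F xk, z⟫_ℝ + bregman ω gω xk z) X yk)
    (hxk1X : xk1 ∈ X) (hxk1o : xk1 ∈ Xo)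
    (hxk1 : IsMinOn (fun z => ⟪γk • F yk, z⟫_ℝ + bregman ω gω xk z) X xk1) :
    -(γk ^ 2 / (2 * α)) * (dnrm (F xk - F yk)) ^ 2 + bregman ω gω xk yk ≤
      bregman ω gω xk xs - bregman ω gω xk1 xs := by
  let p : Seminorm ℝ (EuclideanSpace ℝ (Fin n)) :=
    Seminorm.of nrm hnt fun c v => by rw [hns, Real.norm_eq_abs]
  have hprox_y := inner_le_bregman_of_isMinOn hXcv hykX hxk1X (hgrad yk hyko) hyk
  have hprox_x := inner_le_bregman_of_isMinOn hXcv hxk1X hxs (hgrad xk1 hxk1o) hxk1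
  have hsplit : ⟪γk • F yk, xk1 - xs⟫_ℝ + ⟪γk • F xk, yk - xk1⟫_ℝ =
      γk * ⟪F yk, yk - xs⟫_ℝ - γk * ⟪F xk - F yk, xk1 - yk⟫_ℝ := by
    simp only [real_inner_smul_left, inner_sub_left, inner_sub_right]
    ring
  have hmono : 0 ≤ γk * ⟪F yk, yk - xs⟫_ℝ := mul_nonneg hγk.le (hGM yk hykX)
  have hholder : ⟪F xk - F yk, xk1 - yk⟫_ℝ ≤ dnrm (F xk - F yk) * nrm (yk - xk1) := by
    rw [hdual, show nrm (yk - xk1) = p (xk1 - yk) from map_sub_rev p _ _]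
    exact p.inner_le_dualNorm_mul (fun v => (hn0 v).mp) _ _
  set d := dnrm (F xk - F yk)
  set t := nrm (yk - xk1)
  have hstrong : α / 2 * t ^ 2 ≤ bregman ω gω yk xk1 := hsc yk hyko xk1 hxk1X
  have hyoung : γk * (d * t) ≤ γk ^ 2 / (2 * α) * d ^ 2 + α / 2 * t ^ 2 := by
    have hsq : γk ^ 2 / (2 * α) * d ^ 2 + α / 2 * t ^ 2 - γk * (d * t) =
        (γk * d - α * t) ^ 2 / (2 * α) := by
      field_simp
      ring
    linarith [div_nonneg (sq_nonneg (γk * d - α * t)) (by positivity : (0 : ℝ) ≤ 2 * α)]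
  linarith [mul_le_mul_of_nonneg_left hholder hγk.le]

/-- One step of the non-Euclidean extragradient method:
`y_k = P_{x_k}(γ_k F(x_k))`, `x_{k+1} = P_{x_k}(γ_k F(y_k))`. For a generalized-monotone
solution `x*`, `−(γ_k²/(2α))‖F(x_k)−F(y_k)‖_*² + V(x_k,y_k) ≤ V(x_k,x*) − V(x_{k+1},x*)`. -/
theorem stmt12 {n : ℕ} (X Xo : Set (EuclideanSpace ℝ (Fin n)))
    (hXne : X.Nonempty) (hXcl : IsClosed X) (hXcv : Convex ℝ X) (hXoX : Xo ⊆ X)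
    (nrm dnrm : EuclideanSpace ℝ (Fin n) → ℝ)
    (hn0 : ∀ v, nrm v = 0 ↔ v = 0)
    (hns : ∀ (c : ℝ) v, nrm (c • v) = |c| * nrm v)
    (hnt : ∀ v w, nrm (v + w) ≤ nrm v + nrm w)
    (hdual : ∀ φ, dnrm φ = sSup ((fun v => ⟪φ, v⟫_ℝ) '' {v | nrm v ≤ 1}))
    (F : EuclideanSpace ℝ (Fin n) → EuclideanSpace ℝ (Fin n))
    (hFct : ContinuousOn F X)
    (α : ℝ) (hα : 0 < α)
    (ω : EuclideanSpace ℝ (Fin n) → ℝ)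
    (gω : EuclideanSpace ℝ (Fin n) → EuclideanSpace ℝ (Fin n))
    (hωcv : ConvexOn ℝ X ω)
    (hgrad : ∀ y ∈ Xo, HasGradientAt ω (gω y) y)
    (hsc : ∀ y ∈ Xo, ∀ z ∈ X, α / 2 * (nrm (y - z)) ^ 2 ≤ bregman ω gω y z)
    (xs : EuclideanSpace ℝ (Fin n)) (hxs : xs ∈ X)
    (hGM : ∀ x ∈ X, 0 ≤ ⟪F x, x - xs⟫_ℝ)
    (γk : ℝ) (hγk : 0 < γk)
    (xk yk xk1 : EuclideanSpace ℝ (Fin n))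
    (hxk : xk ∈ X) (hxko : xk ∈ Xo)
    (hykX : yk ∈ X) (hyko : yk ∈ Xo)
    (hyk : IsMinOn (fun z => ⟪γk • F xk, z⟫_ℝ + bregman ω gω xk z) X yk)
    (hxk1X : xk1 ∈ X) (hxk1o : xk1 ∈ Xo)
    (hxk1 : IsMinOn (fun z => ⟪γk • F yk, z⟫_ℝ + bregman ω gω xk z) X xk1) :
    -(γk ^ 2 / (2 * α)) * (dnrm (F xk - F yk)) ^ 2 + bregman ω gω xk yk ≤
      bregman ω gω xk xs - bregman ω gω xk1 xs :=
  stmt12_general X Xo hXcv nrm dnrm hn0 hns hnt hdual F α hα ω gω hgrad hsc xs hxs hGM γk hγk xk yk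
    xk1 hykX hyko hyk hxk1X hxk1o hxk1
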